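/- The hazard rate (Mills ratio reciprocal) h(x) = φ(x)/Φ̄(x) of the standard normal distribution satisfies 0 < h'(x) < 1 for all x ∈ ℝ, where h'(x) = h(x)(h(x) - x). -/

import Mathlib

noncomputable def phi (x : ℝ) : ℝ := (Real.sqrt (2 * Real.pi))⁻¹ * Real.exp (-x ^ 2 / 2)

noncomputable def Phibar (x : ℝ) : ℝ := ∫ t in Set.Ioi x, phi t

/-!
With `h = φ / Φ̄`, the identities `φ' = -x φ` and `Φ̄' = -φ` give `h' = h (h - x)`, so `h' > 0` is
the Mills inequality `x Φ̄(x) < φ(x)`, i.e. `∫ₓ^∞ (t - x) φ(t) dt > 0`.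

For `h' < 1`, consider `Φ̄² (h' - 1) = φ² - x φ Φ̄ - Φ̄²`. Its derivative is
`φ ((1 + x²) Φ̄ - x φ)`, positive by Gordon's bound `x φ / (1 + x²) < Φ̄`; as it tends to `0` at
`+∞`, it is negative. Gordon's bound is proved the same way: `Φ̄ - x φ / (1 + x²)` has derivative
`-2 φ / (1 + x²)²` and tends to `0` at `+∞`.
-/

open Set MeasureTheory Filter Topology ProbabilityTheory

theorem StrictMono.lt_of_tendsto_atTop {α β : Type*} [TopologicalSpace α] [Preorder α]
    [OrderClosedTopology α] [SemilatticeSup β] [NoMaxOrder β] {f : β → α} {a : α}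
    (hf : StrictMono f) (ha : Tendsto f atTop (𝓝 a)) (b : β) : f b < a :=
  let ⟨_, hbc⟩ := exists_gt b
  (hf hbc).trans_le (hf.monotone.ge_of_tendsto ha _)

theorem StrictAnti.lt_of_tendsto_atTop {α β : Type*} [TopologicalSpace α] [Preorder α]
    [OrderClosedTopology α] [SemilatticeSup β] [NoMaxOrder β] {f : β → α} {a : α}
    (hf : StrictAnti f) (ha : Tendsto f atTop (𝓝 a)) (b : β) : a < f b :=
  let ⟨_, hbc⟩ := exists_gt b
  (hf.antitone.le_of_tendsto ha _).trans_lt (hf hbc)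

theorem setIntegral_pos_of_pos_on {X : Type*} [MeasurableSpace X] {μ : Measure X} {s : Set X}
    {f : X → ℝ} (hs : MeasurableSet s) (hμs : μ s ≠ 0) (hf : IntegrableOn f s μ)
    (hpos : ∀ x ∈ s, 0 < f x) : 0 < ∫ x in s, f x ∂μ := by
  rw [setIntegral_pos_iff_support_of_nonneg_ae
      (ae_restrict_of_forall_mem hs fun x hx => (hpos x hx).le) hf,
    inter_eq_self_of_subset_right (show s ⊆ Function.support f from fun x hx => (hpos x hx).ne')]
  exact pos_iff_ne_zero.2 hμs

theorem hasDerivAt_integral_Ioi {E : Type*} [NormedAddCommGroup E] [NormedSpace ℝ E]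
    [CompleteSpace E] {f : ℝ → E} {x : ℝ} (hf : Integrable f) (hfx : ContinuousAt f x) :
    HasDerivAt (fun a => ∫ t in Ioi a, f t) (-f x) x := by
  have hFTC : HasDerivAt (fun a => ∫ t in (0 : ℝ)..a, f t) (f x) x :=
    intervalIntegral.integral_hasDerivAt_right hf.intervalIntegrable
      hf.aestronglyMeasurable.stronglyMeasurableAtFilter hfx
  have hsplit : ∀ a, ∫ t in Ioi a, f t = (∫ t in Ioi 0, f t) - ∫ t in (0 : ℝ)..a, f t :=
    fun a => by
      rw [← intervalIntegral.integral_Ioi_sub_Ioi' hf.integrableOn hf.integrableOn,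
        sub_sub_cancel]
  simpa [funext hsplit] using hFTC.const_sub (∫ t in Ioi 0, f t)

theorem phi_eq_gaussianPDFReal : phi = gaussianPDFReal 0 1 := by
  ext x; simp [phi, gaussianPDFReal]

theorem phi_pos (x : ℝ) : 0 < phi x := by
  rw [phi_eq_gaussianPDFReal]; exact gaussianPDFReal_pos _ _ _ one_ne_zero

theorem integrable_phi : Integrable phi := by
  rw [phi_eq_gaussianPDFReal]; exact integrable_gaussianPDFReal 0 1

theorem continuous_phi : Continuous phi := by
  unfold phi; fun_prop

theorem hasDerivAt_phi (x : ℝ) : HasDerivAt phi (-x * phi x) x := by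
  have hexp : HasDerivAt (fun t : ℝ => -t ^ 2 / 2) (-x) x :=
    ((hasDerivAt_pow 2 x).neg.div_const 2).congr_deriv (by ring)
  exact (hexp.exp.const_mul _).congr_deriv (by unfold phi; ring)

theorem tendsto_phi_atTop : Tendsto phi atTop (𝓝 0) := by
  have hexp : Tendsto (fun x : ℝ => -x ^ 2 / 2) atTop atBot :=
    (tendsto_neg_atBot_iff.2 (tendsto_pow_atTop two_ne_zero)).atBot_div_const two_pos
  have h := (Real.tendsto_exp_atBot.comp hexp).const_mul (Real.sqrt (2 * Real.pi))⁻¹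
  rwa [mul_zero] at h

theorem integrable_mul_phi : Integrable fun t => t * phi t := by
  convert (integrable_mul_exp_neg_mul_sq (by norm_num : (0 : ℝ) < 1 / 2)).const_mul
    (Real.sqrt (2 * Real.pi))⁻¹ using 2 with t
  unfold phi; ring_nf

theorem Phibar_pos (x : ℝ) : 0 < Phibar x :=
  setIntegral_pos_of_pos_on measurableSet_Ioi (by simp) integrable_phi.integrableOn
    fun t _ => phi_pos t

theorem hasDerivAt_Phibar (x : ℝ) : HasDerivAt Phibar (-phi x) x :=
  hasDerivAt_integral_Ioi integrable_phi continuous_phi.continuousAt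

theorem integral_Ioi_mul_phi (x : ℝ) : ∫ t in Ioi x, t * phi t = phi x := by
  have h := integral_Ioi_of_hasDerivAt_of_tendsto (a := x) continuous_phi.neg.continuousWithinAt
    (fun t _ => (hasDerivAt_phi t).neg.congr_deriv (by ring)) integrable_mul_phi.integrableOn
    tendsto_phi_atTop.neg
  simpa using h

theorem mul_Phibar_lt_phi (x : ℝ) : x * Phibar x < phi x := by
  have hint : IntegrableOn (fun t => t * phi t - x * phi t) (Ioi x) :=
    (integrable_mul_phi.sub (integrable_phi.const_mul x)).integrableOn
  have hpos : 0 < ∫ t in Ioi x, (t * phi t - x * phi t) :=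
    setIntegral_pos_of_pos_on measurableSet_Ioi (by simp) hint fun t ht => by
      nlinarith [phi_pos t, mem_Ioi.1 ht]
  rwa [integral_sub integrable_mul_phi.integrableOn (integrable_phi.const_mul x).integrableOn,
    integral_Ioi_mul_phi, integral_const_mul, sub_pos] at hpos

theorem tendsto_Phibar_atTop : Tendsto Phibar atTop (𝓝 0) := by
  refine squeeze_zero' (Eventually.of_forall fun x => (Phibar_pos x).le) ?_ tendsto_phi_atTop
  filter_upwards [eventually_ge_atTop 1] with x hx
  nlinarith [mul_Phibar_lt_phi x, Phibar_pos x]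

theorem hasDerivAt_Phibar_sub_mul_phi_div (x : ℝ) :
    HasDerivAt (fun s => Phibar s - s * phi s / (1 + s ^ 2))
      (-(2 * phi x / (1 + x ^ 2) ^ 2)) x := by
  have hx : (1 : ℝ) + x ^ 2 ≠ 0 := by positivity
  have hnum : HasDerivAt (fun s => s * phi s) (phi x - x ^ 2 * phi x) x :=
    ((hasDerivAt_id' x).mul (hasDerivAt_phi x)).congr_deriv (by ring)
  have hden : HasDerivAt (fun s : ℝ => 1 + s ^ 2) (2 * x) x := by
    simpa using (hasDerivAt_pow 2 x).const_add 1
  refine ((hasDerivAt_Phibar x).sub (hnum.div hden hx)).congr_deriv ?_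
  field_simp
  ring

theorem mul_phi_div_one_add_sq_lt_Phibar (x : ℝ) : x * phi x / (1 + x ^ 2) < Phibar x := by
  have hanti : StrictAnti fun s => Phibar s - s * phi s / (1 + s ^ 2) :=
    strictAnti_of_deriv_neg fun s => by
      rw [(hasDerivAt_Phibar_sub_mul_phi_div s).deriv, neg_lt_zero]
      exact div_pos (mul_pos two_pos (phi_pos s)) (by positivity)
  have hlim : Tendsto (fun s => s * phi s / (1 + s ^ 2)) atTop (𝓝 0) := by
    refine squeeze_zero_norm (fun s => ?_) tendsto_phi_atTop
    rw [norm_div, norm_mul, Real.norm_eq_abs s, Real.norm_of_nonneg (phi_pos s).le,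
      Real.norm_of_nonneg (by positivity : (0 : ℝ) ≤ 1 + s ^ 2), div_le_iff₀ (by positivity)]
    nlinarith [phi_pos s, abs_nonneg s, sq_abs s, sq_nonneg (|s| - 1)]
  have h := hanti.lt_of_tendsto_atTop (by simpa using tendsto_Phibar_atTop.sub hlim) x
  linarith

noncomputable def hazardGap (x : ℝ) : ℝ := phi x ^ 2 - x * phi x * Phibar x - Phibar x ^ 2

theorem hasDerivAt_hazardGap (x : ℝ) :
    HasDerivAt hazardGap (phi x * ((1 + x ^ 2) * Phibar x - x * phi x)) x := by
  have hphi := hasDerivAt_phi x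
  have hPhibar := hasDerivAt_Phibar x
  refine (((hphi.pow 2).sub (((hasDerivAt_id' x).mul hphi).mul hPhibar)).sub
    (hPhibar.pow 2)).congr_deriv ?_
  simp only [Pi.mul_apply]
  ring

theorem strictMono_hazardGap : StrictMono hazardGap :=
  strictMono_of_deriv_pos fun x => by
    rw [(hasDerivAt_hazardGap x).deriv]
    have h := mul_phi_div_one_add_sq_lt_Phibar x
    rw [div_lt_iff₀' (by positivity)] at h
    exact mul_pos (phi_pos x) (sub_pos.2 h)

theorem tendsto_hazardGap_atTop : Tendsto hazardGap atTop (𝓝 0) := by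
  have hmid : Tendsto (fun x => x * phi x * Phibar x) atTop (𝓝 0) := by
    refine squeeze_zero' ?_ ?_ (by simpa using tendsto_phi_atTop.mul tendsto_phi_atTop)
    · filter_upwards [eventually_ge_atTop 0] with x hx
      exact mul_nonneg (mul_nonneg hx (phi_pos x).le) (Phibar_pos x).le
    · filter_upwards [eventually_ge_atTop 0] with x hx
      nlinarith [mul_Phibar_lt_phi x, phi_pos x]
  have h := ((tendsto_phi_atTop.pow 2).sub hmid).sub (tendsto_Phibar_atTop.pow 2)
  rwa [zero_pow two_ne_zero, sub_zero, sub_zero] at h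

theorem hasDerivAt_phi_div_Phibar (x : ℝ) :
    HasDerivAt (fun t => phi t / Phibar t) (phi x / Phibar x * (phi x / Phibar x - x)) x := by
  have hP := (Phibar_pos x).ne'
  refine ((hasDerivAt_phi x).div (hasDerivAt_Phibar x) hP).congr_deriv ?_
  field_simp
  ring

/-- The standard normal hazard rate `h(x) = φ(x)/Φ̄(x)` satisfies
`h'(x) = h(x)(h(x) - x)` and `0 < h'(x) < 1` for all `x`. -/
theorem stmt2 (x : ℝ) :
    deriv (fun t => phi t / Phibar t) x = (phi x / Phibar x) * (phi x / Phibar x - x) ∧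
    0 < deriv (fun t => phi t / Phibar t) x ∧
    deriv (fun t => phi t / Phibar t) x < 1 := by
  have hP := Phibar_pos x
  have hx : x < phi x / Phibar x := (lt_div_iff₀ hP).2 (mul_Phibar_lt_phi x)
  have hgap : hazardGap x < 0 :=
    strictMono_hazardGap.lt_of_tendsto_atTop tendsto_hazardGap_atTop x
  rw [(hasDerivAt_phi_div_Phibar x).deriv]
  refine ⟨rfl, mul_pos (div_pos (phi_pos x) hP) (sub_pos.2 hx), ?_⟩
  have hquot : phi x / Phibar x * (phi x / Phibar x - x) - 1 = hazardGap x / Phibar x ^ 2 := by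
    unfold hazardGap; field_simp
  linarith [div_neg_of_neg_of_pos hgap (pow_pos hP 2)]
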